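/- arXiv:1412.3756 — 5 statements merged into one kernel-verified Lean document; each statement's English description precedes it below -/
import Mathlib

section
/- Let α, β ∈ [0,1] and set π₀ = β, π₁ = 1 - α. If the balanced error rate BER = (α + β)/2 of the purely biased classifier satisfies BER ≤ ε with ε < 1/2 and π₀ = β > 0, then the disparate impact DI = π₀/π₁ satisfies DI ≤ 1 - (1 - 2ε)/(β + 1 - 2ε). -/
theorem div_le_one_sub_div_add {K : Type*} [Field K] [LinearOrder K] [IsStrictOrderedRing K]
    {b c d : K} (hb : 0 ≤ b) (hbc : 0 < b + c) (hd : b + c ≤ d) :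
    b / d ≤ 1 - c / (b + c) := by
  rw [one_sub_div hbc.ne', add_sub_cancel_right]
  exact div_le_div_of_nonneg_left hb hbc hd

theorem di_bound_from_ber_general (α β ε : ℝ)
    (hβpos : 0 < β) (hε : ε < 1/2)
    (hber : (α + β) / 2 ≤ ε) :
    β / (1 - α) ≤ 1 - (1 - 2*ε) / (β + 1 - 2*ε) := by
  have hπ₁ : β + (1 - 2*ε) ≤ 1 - α := by linarith
  have key := div_le_one_sub_div_add hβpos.le (by linarith) hπ₁
  rwa [← add_sub_assoc] at key

/-- If the purely biased classifier with false-negative rate `α` and false-positive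
rate `β` has balanced error rate `(α+β)/2 ≤ ε < 1/2` and `β > 0`, then the disparate
impact `π₀/π₁ = β/(1-α)` is at most `1 - (1-2ε)/(β+1-2ε)`. -/
theorem di_bound_from_ber (α β ε : ℝ)
    (hα : α ∈ Set.Icc (0:ℝ) 1) (hβ : β ∈ Set.Icc (0:ℝ) 1)
    (hβpos : 0 < β) (hε : ε < 1/2)
    (hber : (α + β) / 2 ≤ ε) :
    β / (1 - α) ≤ 1 - (1 - 2*ε) / (β + 1 - 2*ε) :=
  di_bound_from_ber_general α β ε hβpos hε hber
end

section
/- Let β ∈ (0,1] and suppose a classifier g: Y → C has DI(g) = π₀/π₁ ≤ τ = 4/5, where π₀ = β and π₁ ∈ (0,1]. Then the composed predictor φ = ψ ∘ g with the purely biased map ψ satisfies BER(φ) = (1 + π₀ - π₁)/2 ≤ 1/2 - β/8. Equivalently: disparate impact at threshold 4/5 implies (1/2 - β/8)-predictability. -/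
/-- Disparate impact at threshold `4/5` implies `(1/2 - β/8)`-predictability:
if `π₀ = β` and `DI = π₀/π₁ ≤ 4/5`, then the purely biased composed predictor
has `BER = (1 + π₀ - π₁)/2 ≤ 1/2 - β/8`. -/
theorem di_implies_predictability (β π₀ π₁ : ℝ)
    (hβ : β ∈ Set.Ioc (0:ℝ) 1) (hπ₀ : π₀ = β)
    (hπ₁ : π₁ ∈ Set.Ioc (0:ℝ) 1)
    (hdi : π₀ / π₁ ≤ 4/5) :
    (1 + π₀ - π₁) / 2 ≤ 1/2 - β/8 := by 
  obtain ⟨h1, _⟩ := hπ₁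
  have h2 : π₀ ≤ 4/5 * π₁ := (div_le_iff₀ h1).mp hdi
  linarith [hβ.1]
end

section
/- Let β ∈ (0,1]. Suppose there is a predictor f: Y → X with BER(f) ≤ ε = 1/2 - β/8, where π₀ = β is the rate Pr[f(Y)=1 | X=0] and π₁ = Pr[f(Y)=1 | X=1] > 0. Then the classifier g = ψ⁻¹ ∘ f satisfies DI(g) = π₀/π₁ ≤ 4/5. That is, (1/2 - β/8)-predictability implies disparate impact at threshold 4/5. -/
/-- `(1/2 - β/8)`-predictability implies disparate impact at threshold `4/5`:
if a predictor has `BER = (1 + π₀ - π₁)/2 ≤ 1/2 - β/8` with `π₀ = β` and `π₁ > 0`,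
then `DI = π₀/π₁ ≤ 4/5`. -/
theorem predictability_implies_di (β π₀ π₁ : ℝ)
    (hβ : β ∈ Set.Ioc (0:ℝ) 1) (hπ₀ : π₀ = β) (hπ₁ : 0 < π₁)
    (hber : (1 + π₀ - π₁) / 2 ≤ 1/2 - β/8) :
    π₀ / π₁ ≤ 4/5 := by
  obtain ⟨hβ0, hβ1⟩ := hβ
  rw [div_le_div_iff₀ hπ₁ (by norm_num)]
  nlinarith
end

section
/- Fix ε ∈ [0, 1/2). Among all points (π₀, π₁) ∈ (0,1]² with BER = (1 + π₀ - π₁)/2 = ε, the disparate impact is DI = π₀/π₁ = π₀/(π₀ + 1 - 2ε), which is strictly increasing in π₀; hence the supremum of DI over π₀ ∈ (0, 2ε] equals 2ε, attained when π₀ = 2ε and π₁ = 1. -/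
/-- On the `BER = ε` contour (`π₁ = π₀ + 1 - 2ε`), the disparate impact
`DI = π₀/(π₀ + 1 - 2ε)` is strictly increasing in `π₀ > 0`, and its supremum over
feasible `π₀ ∈ (0, 2ε]` equals `2ε`. -/
theorem di_max_on_ber_contour (ε : ℝ) (hε : ε ∈ Set.Ico (0:ℝ) (1/2)) :
    (∀ x y : ℝ, 0 < x → x < y → x / (x + 1 - 2*ε) < y / (y + 1 - 2*ε)) ∧
    sSup ((fun π₀ : ℝ => π₀ / (π₀ + 1 - 2*ε)) '' Set.Ioc 0 (2*ε)) = 2*ε := by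
  obtain ⟨hε0, hε1⟩ := hε
  have hc : (0:ℝ) < 1 - 2*ε := by linarith
  have hmono : ∀ x y : ℝ, 0 < x → x < y → x / (x + 1 - 2*ε) < y / (y + 1 - 2*ε) := by
    intro x y hx hxy
    have hdx : 0 < x + 1 - 2*ε := by linarith
    have hdy : 0 < y + 1 - 2*ε := by linarith
    rw [div_lt_div_iff₀ hdx hdy]
    nlinarith
  refine ⟨hmono, ?_⟩
  rcases eq_or_lt_of_le hε0 with h0 | h0
  · have : (2:ℝ)*ε = 0 := by rw [← h0]; ring
    rw [this, Set.Ioc_self, Set.image_empty, Real.sSup_empty]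
  · have h2ε : 0 < 2*ε := by linarith
    have hval : (2*ε) / (2*ε + 1 - 2*ε) = 2*ε := by
      field_simp
      ring
    apply IsGreatest.csSup_eq
    constructor
    · exact ⟨2*ε, ⟨h2ε, le_refl _⟩, hval⟩
    · rintro z ⟨x, ⟨hx0, hx2⟩, rfl⟩
      rcases eq_or_lt_of_le hx2 with h | h
      · rw [h]; exact le_of_eq hval
      · have := hmono x (2*ε) hx0 h
        rw [hval] at this
        exact this.le
end

section
/- A data set is (1/2 - β/8)-predictable if and only if it admits disparate impact at threshold τ = 4/5: formally, in the (π₀,π₁) parametrization with π₀ = β > 0 and π₁ > 0, there exists a classifier with BER ≤ 1/2 - β/8 if and only if there exists a classifier with DI = π₀/π₁ ≤ 4/5, where the two classifiers are related by composing with the purely biased bijection between outcomes and protected-attribute values (which preserves the confusion matrix). -/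
/-- A data set is `(1/2 - β/8)`-predictable iff it admits disparate impact at
threshold `4/5`: for fixed `β ∈ (0,1]`, there exists a classifier
(parametrized by `π₁ ∈ (0,1]` with `π₀ = β`) with `BER = (1+β-π₁)/2 ≤ 1/2 - β/8`
iff there exists one with `DI = β/π₁ ≤ 4/5`. -/
theorem predictability_iff_di (β : ℝ) (hβ : β ∈ Set.Ioc (0:ℝ) 1) :
    (∃ π₁ ∈ Set.Ioc (0:ℝ) 1, (1 + β - π₁) / 2 ≤ 1/2 - β/8) ↔
    (∃ π₁ ∈ Set.Ioc (0:ℝ) 1, β / π₁ ≤ 4/5) := by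
  constructor
  · rintro ⟨π₁, ⟨h0, h1⟩, h⟩
    refine ⟨π₁, ⟨h0, h1⟩, ?_⟩
    rw [div_le_iff₀ h0]
    linarith
  · rintro ⟨π₁, ⟨h0, h1⟩, h⟩
    refine ⟨π₁, ⟨h0, h1⟩, ?_⟩
    rw [div_le_iff₀ h0] at h
    linarith
end
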